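/- Assume ζ_3 ≠ ζ_4 and let μ ∈ F. Set Ψ_{1234} = Φ_{1234} + μ b^{(2)} b^{(1)}. Then ∬ exp(Ψ_{1234}) db^{(1)} db^{(2)} = h_{1234} = f_{1234} + μ (integration over b^{(1)} first, then b^{(2)}). -/

import Mathlib

/-!  Context: a Grassmann algebra `Λ` over a field `F` of characteristic ≠ 2, with
anticommuting generators indexed by a type `ι` (for us: the (3-element) subsets
`S ⊆ Fin 5`, possibly together with extra generators `b`).  Vertex `k ∈ {1,…,5}`
of the paper corresponds to `k - 1 : Fin 5`, so `ζ_{ij} = ζ (i-1) - ζ (j-1)`.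
The Berezin integral in a generator is axiomatized by the predicate `IsBerezin`. -/

/-- The subalgebra of elements not involving the generator `e i`, i.e. the
subalgebra generated by all the other generators. -/
def notInvolving (F : Type*) [Field F] {Λ : Type*} [Ring Λ] [Algebra F Λ]
    {ι : Type*} (e : ι → Λ) (i : ι) : Subalgebra F Λ :=
  Algebra.adjoin F { x | ∃ j, j ≠ i ∧ x = e j }

/-- `B` is the Berezin integral with respect to the generator `e i`: it is `F`-linear
and, writing `x = g + h * e i` with `g`, `h` not involving `e i` (the generator moved
to the rightmost position), one has `B x = h`.  Equivalently: `B g = 0` and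
`B (h * e i) = h` for `g`, `h` not involving `e i`. -/
def IsBerezin (F : Type*) [Field F] {Λ : Type*} [Ring Λ] [Algebra F Λ]
    {ι : Type*} (e : ι → Λ) (i : ι) (B : Λ →ₗ[F] Λ) : Prop :=
  (∀ g ∈ notInvolving F e i, B g = 0) ∧
  (∀ h ∈ notInvolving F e i, B (h * e i) = h)

/-- The tetrahedron weight `f_{i₁i₂i₃i₄}` (formula (1) of the paper), where
`a S` is the Grassmann generator attached to the unoriented 2-face `S`. -/
def fw {F : Type*} [Field F] {Λ : Type*} [Ring Λ] [Algebra F Λ]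
    (ζ : Fin 5 → F) (a : Finset (Fin 5) → Λ) (i₁ i₂ i₃ i₄ : Fin 5) : Λ :=
  (ζ i₁ - ζ i₂) • (a {i₁, i₂, i₃} * a {i₁, i₂, i₄})
    - (ζ i₁ - ζ i₃) • (a {i₁, i₂, i₃} * a {i₁, i₃, i₄})
    + (ζ i₁ - ζ i₄) • (a {i₁, i₂, i₄} * a {i₁, i₃, i₄})
    + (ζ i₂ - ζ i₃) • (a {i₁, i₂, i₃} * a {i₂, i₃, i₄})
    - (ζ i₂ - ζ i₄) • (a {i₁, i₂, i₄} * a {i₂, i₃, i₄})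
    + (ζ i₃ - ζ i₄) • (a {i₁, i₃, i₄} * a {i₂, i₃, i₄})

/-- The deformed weight `h_{i₁i₂i₃i₄} = f_{i₁i₂i₃i₄} + ε μ` (with orientation
sign `eps = ε_{i₁i₂i₃i₄}`, and `μ` times the unit of `Λ`). -/
def hw {F : Type*} [Field F] {Λ : Type*} [Ring Λ] [Algebra F Λ]
    (ζ : Fin 5 → F) (a : Finset (Fin 5) → Λ) (mu eps : F) (i₁ i₂ i₃ i₄ : Fin 5) : Λ :=
  fw ζ a i₁ i₂ i₃ i₄ + (eps * mu) • (1 : Λ)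

/-- The (terminating) Taylor series of the exponential of a nilpotent element:
`exp x = Σ_{n < N} xⁿ/n!`, where `N` is any bound with `x ^ N = 0`. -/
def expT (F : Type*) [Field F] {Λ : Type*} [Ring Λ] [Algebra F Λ] (N : ℕ) (x : Λ) : Λ :=
  ∑ n ∈ Finset.range N, ((n.factorial : F))⁻¹ • x ^ n

/-- The bilinear form `Φ_{i₁i₂i₃i₄}` (formula (6) of the paper):
`Φ = b⁽¹⁾(ζ_{i₂i₃} a_{i₁i₂i₃} − ζ_{i₂i₄} a_{i₁i₂i₄} + ζ_{i₃i₄} a_{i₁i₃i₄})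
   + b⁽²⁾((ζ_{i₁i₃}/ζ_{i₃i₄}) a_{i₁i₂i₃} − (ζ_{i₁i₄}/ζ_{i₃i₄}) a_{i₁i₂i₄} + a_{i₂i₃i₄})`,
where `e (Sum.inl S) = a_S` and `e (Sum.inr b₁)`, `e (Sum.inr b₂)` are the two
extra generators `b⁽¹⁾`, `b⁽²⁾` attached to the tetrahedron. -/
def PhiT {F : Type*} [Field F] {Λ : Type*} [Ring Λ] [Algebra F Λ] {β : Type*}
    (ζ : Fin 5 → F) (e : Finset (Fin 5) ⊕ β → Λ) (b₁ b₂ : β) (i₁ i₂ i₃ i₄ : Fin 5) : Λ :=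
  e (Sum.inr b₁) *
      ((ζ i₂ - ζ i₃) • e (Sum.inl {i₁, i₂, i₃}) - (ζ i₂ - ζ i₄) • e (Sum.inl {i₁, i₂, i₄})
        + (ζ i₃ - ζ i₄) • e (Sum.inl {i₁, i₃, i₄}))
    + e (Sum.inr b₂) *
      (((ζ i₁ - ζ i₃) / (ζ i₃ - ζ i₄)) • e (Sum.inl {i₁, i₂, i₃})
        - ((ζ i₁ - ζ i₄) / (ζ i₃ - ζ i₄)) • e (Sum.inl {i₁, i₂, i₄})
        + e (Sum.inl {i₂, i₃, i₄}))

/-!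
Write `Φ₁₂₃₄ = b⁽¹⁾ X + b⁽²⁾ Y`, where `X` and `Y` lie in the span of the generators `a_S`.
Everything in the span of the generators anticommutes and `b⁽ⁱ⁾² = 0`, so
`Ψ² = -2 b⁽¹⁾ b⁽²⁾ X Y` and `exp Ψ = 1 + Ψ + Ψ²/2 = (1 + b⁽²⁾ Y) + (-X + (μ + X Y) b⁽²⁾) b⁽¹⁾`.
This is already in the normal form for integrating out `b⁽¹⁾` and then `b⁽²⁾`, which leaves
`μ + X Y`; finally `X Y = f₁₂₃₄` by direct expansion, dividing by `ζ₃₄`.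
-/

open Submodule Set

section Anticommute

variable {R Λ : Type*} [CommSemiring R] [Ring Λ] [Algebra R Λ]

theorem mul_mul_eq_neg_of_mul_eq_neg {a b : Λ} (h : a * b = -(b * a)) (z : Λ) :
    a * (b * z) = -(b * (a * z)) := by
  rw [← mul_assoc, h, neg_mul, mul_assoc]

theorem mul_eq_neg_mul_of_mem_span {ι : Type*} {e : ι → Λ}
    (hanti : ∀ i j, e i * e j = -(e j * e i)) {x y : Λ}
    (hx : x ∈ span R (range e)) (hy : y ∈ span R (range e)) : x * y = -(y * x) := by
  induction hx, hy using span_induction₂ with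
  | mem_mem x y hx hy =>
    obtain ⟨i, rfl⟩ := hx
    obtain ⟨j, rfl⟩ := hy
    exact hanti i j
  | zero_left => simp
  | zero_right => simp
  | add_left x y z _ _ _ hxz hyz => rw [add_mul, mul_add, hxz, hyz, neg_add]
  | add_right x y z _ _ _ hxy hxz => rw [mul_add, add_mul, hxy, hxz, neg_add]
  | smul_left r x y _ _ hxy => rw [smul_mul_assoc, mul_smul_comm, hxy, smul_neg]
  | smul_right r x y _ _ hxy => rw [smul_mul_assoc, mul_smul_comm, hxy, smul_neg]

end Anticommute

section Gaussian

variable {F Λ : Type*} [Field F] [Ring Λ] [Algebra F Λ]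

theorem expT_three (x : Λ) : expT F 3 x = 1 + x + (2 : F)⁻¹ • x ^ 2 := by
  simp [expT, Finset.sum_range_succ, Nat.factorial]

theorem expT_three_gaussian (hchar : (2 : F) ≠ 0) {b₁ b₂ X Y : Λ} (mu : F)
    (hb₁ : b₁ * b₁ = 0) (hb₂ : b₂ * b₂ = 0) (hb : b₂ * b₁ = -(b₁ * b₂))
    (hXb₁ : X * b₁ = -(b₁ * X)) (hXb₂ : X * b₂ = -(b₂ * X))
    (hYb₁ : Y * b₁ = -(b₁ * Y)) (hYb₂ : Y * b₂ = -(b₂ * Y)) (hYX : Y * X = -(X * Y)) :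
    expT F 3 (b₁ * X + b₂ * Y + mu • (b₂ * b₁)) =
      (1 + b₂ * Y) + (-X + (mu • 1 + X * Y) * b₂) * b₁ := by
  have hb₁' (z : Λ) : b₁ * (b₁ * z) = 0 := by rw [← mul_assoc, hb₁, zero_mul]
  have hb₂' (z : Λ) : b₂ * (b₂ * z) = 0 := by rw [← mul_assoc, hb₂, zero_mul]
  rw [expT_three]
  simp only [pow_two, add_mul, mul_add, smul_mul_assoc, mul_smul_comm, mul_assoc, one_mul,
    neg_mul, mul_neg, hb, hXb₁, hXb₂, hYb₁, hYb₂, hYX, mul_mul_eq_neg_of_mul_eq_neg hb,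
    mul_mul_eq_neg_of_mul_eq_neg hXb₁, mul_mul_eq_neg_of_mul_eq_neg hXb₂,
    mul_mul_eq_neg_of_mul_eq_neg hYb₁, mul_mul_eq_neg_of_mul_eq_neg hYb₂, hb₁', hb₂',
    neg_neg, mul_zero, smul_zero, neg_zero, add_zero, zero_add, smul_add, smul_neg]
  match_scalars <;> field_simp
  ring

end Gaussian

section Berezin

variable {F Λ : Type*} [Field F] [Ring Λ] [Algebra F Λ] {ι : Type*} {e : ι → Λ}

theorem generator_mem_notInvolving {i j : ι} (hj : j ≠ i) : e j ∈ notInvolving F e i :=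
  Algebra.subset_adjoin ⟨j, hj, rfl⟩

theorem span_range_inl_le_notInvolving {α β : Type*} (e : α ⊕ β → Λ) (b : β) :
    span F (range fun s => e (Sum.inl s)) ≤
      Subalgebra.toSubmodule (notInvolving F e (Sum.inr b)) :=
  span_le.mpr <| range_subset_iff.mpr fun _ => generator_mem_notInvolving Sum.inl_ne_inr

theorem IsBerezin.apply_add_mul {i : ι} {B : Λ →ₗ[F] Λ} (hB : IsBerezin F e i B) {g h : Λ}
    (hg : g ∈ notInvolving F e i) (hh : h ∈ notInvolving F e i) : B (g + h * e i) = h := by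
  rw [map_add, hB.1 g hg, hB.2 h hh, zero_add]

end Berezin

section Tetrahedron

variable {F Λ : Type*} [Field F] [Ring Λ] [Algebra F Λ]

def phiCoeff₁ (ζ : Fin 5 → F) (a : Finset (Fin 5) → Λ) (i₁ i₂ i₃ i₄ : Fin 5) : Λ :=
  (ζ i₂ - ζ i₃) • a {i₁, i₂, i₃} - (ζ i₂ - ζ i₄) • a {i₁, i₂, i₄} + (ζ i₃ - ζ i₄) • a {i₁, i₃, i₄}

def phiCoeff₂ (ζ : Fin 5 → F) (a : Finset (Fin 5) → Λ) (i₁ i₂ i₃ i₄ : Fin 5) : Λ :=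
  ((ζ i₁ - ζ i₃) / (ζ i₃ - ζ i₄)) • a {i₁, i₂, i₃}
    - ((ζ i₁ - ζ i₄) / (ζ i₃ - ζ i₄)) • a {i₁, i₂, i₄} + a {i₂, i₃, i₄}

theorem PhiT_eq {β : Type*} (ζ : Fin 5 → F) (e : Finset (Fin 5) ⊕ β → Λ) (b₁ b₂ : β)
    (i₁ i₂ i₃ i₄ : Fin 5) :
    PhiT ζ e b₁ b₂ i₁ i₂ i₃ i₄ =
      e (Sum.inr b₁) * phiCoeff₁ ζ (fun S => e (Sum.inl S)) i₁ i₂ i₃ i₄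
        + e (Sum.inr b₂) * phiCoeff₂ ζ (fun S => e (Sum.inl S)) i₁ i₂ i₃ i₄ :=
  rfl

theorem phiCoeff₁_mem_span (ζ : Fin 5 → F) (a : Finset (Fin 5) → Λ) (i₁ i₂ i₃ i₄ : Fin 5) :
    phiCoeff₁ ζ a i₁ i₂ i₃ i₄ ∈ span F (range a) := by
  have ha (S : Finset (Fin 5)) : a S ∈ span F (range a) := subset_span (mem_range_self S)
  exact add_mem (sub_mem (smul_mem _ _ (ha _)) (smul_mem _ _ (ha _))) (smul_mem _ _ (ha _))

theorem phiCoeff₂_mem_span (ζ : Fin 5 → F) (a : Finset (Fin 5) → Λ) (i₁ i₂ i₃ i₄ : Fin 5) :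
    phiCoeff₂ ζ a i₁ i₂ i₃ i₄ ∈ span F (range a) := by
  have ha (S : Finset (Fin 5)) : a S ∈ span F (range a) := subset_span (mem_range_self S)
  exact add_mem (sub_mem (smul_mem _ _ (ha _)) (smul_mem _ _ (ha _))) (ha _)

theorem phiCoeff₁_mul_phiCoeff₂ (ζ : Fin 5 → F) (a : Finset (Fin 5) → Λ)
    (hanti : ∀ S T, a S * a T = -(a T * a S)) (hsq : ∀ S, a S * a S = 0)
    {i₁ i₂ i₃ i₄ : Fin 5} (h34 : ζ i₃ ≠ ζ i₄) :
    phiCoeff₁ ζ a i₁ i₂ i₃ i₄ * phiCoeff₂ ζ a i₁ i₂ i₃ i₄ = fw ζ a i₁ i₂ i₃ i₄ := by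
  have h34' : ζ i₃ - ζ i₄ ≠ 0 := sub_ne_zero_of_ne h34
  simp only [phiCoeff₁, phiCoeff₂, fw, sub_mul, add_mul, mul_sub, mul_add, smul_mul_assoc,
    mul_smul_comm, hsq, smul_zero,
    hanti {i₁, i₂, i₄} {i₁, i₂, i₃}, hanti {i₁, i₃, i₄} {i₁, i₂, i₃},
    hanti {i₁, i₃, i₄} {i₁, i₂, i₄}]
  match_scalars <;> field_simp
  ring

end Tetrahedron

-- `expT F 3` is the whole exponential series, since `Ψ₁₂₃₄ ^ 3 = 0`.
/-- Gaussian integral representation of the deformed weight `h₁₂₃₄`: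
with `Ψ₁₂₃₄ = Φ₁₂₃₄ + μ b⁽²⁾ b⁽¹⁾`, one has
`∬ exp(Ψ₁₂₃₄) db⁽¹⁾ db⁽²⁾ = h₁₂₃₄ = f₁₂₃₄ + μ`.
Here `exp(Ψ₁₂₃₄)` terminates: `Ψ₁₂₃₄ ^ 3 = 0`. -/
theorem gaussian_h
    {F : Type*} [Field F] {Λ : Type*} [Ring Λ] [Algebra F Λ]
    (hchar : (2 : F) ≠ 0)
    (ζ : Fin 5 → F)
    (h34 : ζ 2 ≠ ζ 3) (mu : F)
    (e : Finset (Fin 5) ⊕ Fin 2 → Λ)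
    (hanti : ∀ i j, e i * e j = -(e j * e i))
    (hsq : ∀ i, e i * e i = 0)
    (B1 B2 : Λ →ₗ[F] Λ)
    (hB1 : IsBerezin F e (Sum.inr 0) B1)
    (hB2 : IsBerezin F e (Sum.inr 1) B2) :
    B2 (B1 (expT F 3
        (PhiT ζ e 0 1 0 1 2 3 + mu • (e (Sum.inr 1) * e (Sum.inr 0))))) =
      hw ζ (fun S => e (Sum.inl S)) mu 1 0 1 2 3 := by
  set a : Finset (Fin 5) → Λ := fun S => e (Sum.inl S)
  set X := phiCoeff₁ ζ a 0 1 2 3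
  set Y := phiCoeff₂ ζ a 0 1 2 3
  have hX : X ∈ span F (range a) := phiCoeff₁_mem_span ζ a 0 1 2 3
  have hY : Y ∈ span F (range a) := phiCoeff₂_mem_span ζ a 0 1 2 3
  have hodd : span F (range a) ≤ span F (range e) := span_mono (range_comp_subset_range _ _)
  have hb (k : Fin 2) : e (Sum.inr k) ∈ span F (range e) := subset_span (mem_range_self _)
  have anti {x y : Λ} (hx : x ∈ span F (range e)) (hy : y ∈ span F (range e)) :
      x * y = -(y * x) :=
    mul_eq_neg_mul_of_mem_span hanti hx hy
  have hexp : expT F 3 (PhiT ζ e 0 1 0 1 2 3 + mu • (e (Sum.inr 1) * e (Sum.inr 0))) =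
      (1 + e (Sum.inr 1) * Y) + (-X + (mu • 1 + X * Y) * e (Sum.inr 1)) * e (Sum.inr 0) := by
    rw [PhiT_eq]
    exact expT_three_gaussian hchar mu (hsq _) (hsq _) (hanti _ _)
      (anti (hodd hX) (hb 0)) (anti (hodd hX) (hb 1)) (anti (hodd hY) (hb 0))
      (anti (hodd hY) (hb 1)) (anti (hodd hY) (hodd hX))
  have hnot (k : Fin 2) :
      span F (range a) ≤ Subalgebra.toSubmodule (notInvolving F e (Sum.inr k)) :=
    span_range_inl_le_notInvolving e k
  have hb₂ : e (Sum.inr 1) ∈ notInvolving F e (Sum.inr 0) := generator_mem_notInvolving (by simp)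
  rw [hexp,
    hB1.apply_add_mul (add_mem (one_mem _) (mul_mem hb₂ (hnot 0 hY)))
      (add_mem (neg_mem (hnot 0 hX)) (mul_mem (add_mem (Subalgebra.smul_mem _ (one_mem _) _)
        (mul_mem (hnot 0 hX) (hnot 0 hY))) hb₂)),
    hB2.apply_add_mul (neg_mem (hnot 1 hX))
      (add_mem (Subalgebra.smul_mem _ (one_mem _) _) (mul_mem (hnot 1 hX) (hnot 1 hY))),
    phiCoeff₁_mul_phiCoeff₂ ζ a (fun _ _ => hanti _ _) (fun _ => hsq _) h34, hw, one_mul,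
    add_comm]
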